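/- Polynomial matrices give matrix reverse Hölder weights: Let n, d ≥ 1 and let V : ℝⁿ → ℝ^{d×d} be a matrix function each of whose entries is a polynomial of degree at most k. Then for every p with 1 < p < ∞, the matrix weight VᵀV belongs to the matrix reverse Hölder class 𝓑_p with a constant depending only on n and k; in fact there is C = C(n,k) such that for every cube Q ⊂ ℝⁿ and every e ∈ ℝᵈ, (⨍_Q ⟨Vᵀ(x)V(x)e,e⟩^p dx)^{1/p} ≤ C ⨍_Q ⟨Vᵀ(x)V(x)e,e⟩ dx. -/

import Mathlib

open MeasureTheory
open scoped ComplexOrder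

noncomputable section

/-- The open cube in `ℝⁿ` centered at `x` with half side length `r` (side length `2r`). -/
def cube {n : ℕ} (x : Fin n → ℝ) (r : ℝ) : Set (Fin n → ℝ) :=
  {y | ∀ i, |y i - x i| < r}

/-- Entrywise integral of a real matrix-valued function over a set. -/
def matInt {n d : ℕ} (V : (Fin n → ℝ) → Matrix (Fin d) (Fin d) ℝ)
    (s : Set (Fin n → ℝ)) : Matrix (Fin d) (Fin d) ℝ :=
  Matrix.of fun i j => ∫ y in s, V y i j

/-- Entrywise average of a real matrix-valued function over a set. -/
def matAvg {n d : ℕ} (V : (Fin n → ℝ) → Matrix (Fin d) (Fin d) ℝ)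
    (s : Set (Fin n → ℝ)) : Matrix (Fin d) (Fin d) ℝ :=
  Matrix.of fun i j => ⨍ y in s, V y i j

/-- The quadratic form `⟨A e, e⟩`. -/
def qf {d : ℕ} (A : Matrix (Fin d) (Fin d) ℝ) (e : Fin d → ℝ) : ℝ :=
  dotProduct e (A.mulVec e)

/-- Squared Euclidean norm of a real vector. -/
def vnormSq {d : ℕ} (e : Fin d → ℝ) : ℝ := ∑ i, e i ^ 2

/-- The Euclidean operator norm of a real square matrix (its largest singular value). -/
def matOpNorm {d : ℕ} (A : Matrix (Fin d) (Fin d) ℝ) : ℝ :=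
  sSup {t : ℝ | ∃ e : Fin d → ℝ, vnormSq e = 1 ∧ t = Real.sqrt (vnormSq (A.mulVec e))}

/-- `V` is a matrix weight: measurable, a.e. symmetric positive semidefinite, and with
locally integrable operator norm. -/
def IsMatrixWeight {n d : ℕ} (V : (Fin n → ℝ) → Matrix (Fin d) (Fin d) ℝ) : Prop :=
  (∀ i j, Measurable fun x => V x i j) ∧
  (∀ᵐ (x : Fin n → ℝ) ∂volume, (V x).PosSemidef) ∧
  ∀ (x : Fin n → ℝ) (r : ℝ), 0 < r → IntegrableOn (fun y => matOpNorm (V y)) (cube x r)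

/-- The matrix reverse Hölder class `𝓑_p` with constant `C`. -/
def MemBp {n d : ℕ} (p C : ℝ) (V : (Fin n → ℝ) → Matrix (Fin d) (Fin d) ℝ) : Prop :=
  (∀ (x : Fin n → ℝ) (r : ℝ), 0 < r →
    IntegrableOn (fun y => matOpNorm (V y) ^ p) (cube x r)) ∧
  ∀ (x : Fin n → ℝ) (r : ℝ), 0 < r → ∀ e : Fin d → ℝ,
    (⨍ y in cube x r, qf (V y) e ^ p) ^ (1 / p) ≤ C * qf (matAvg V (cube x r)) e

/-- The scalar reverse Hölder class `B_p` with constant `C`. -/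
def MemBpScalar {n : ℕ} (p C : ℝ) (v : (Fin n → ℝ) → ℝ) : Prop :=
  (∀ (x : Fin n → ℝ) (r : ℝ), 0 < r → IntegrableOn (fun y => v y ^ p) (cube x r)) ∧
  ∀ (x : Fin n → ℝ) (r : ℝ), 0 < r →
    (⨍ y in cube x r, v y ^ p) ^ (1 / p) ≤ C * ⨍ y in cube x r, v y

/-- The averaged matrix `Ψ(x,r;V) = r^{2-n} ∫_{Q(x,r)} V`. -/
def Psi {n d : ℕ} (x : Fin n → ℝ) (r : ℝ)
    (V : (Fin n → ℝ) → Matrix (Fin d) (Fin d) ℝ) : Matrix (Fin d) (Fin d) ℝ :=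
  r ^ ((2 : ℝ) - n) • matInt V (cube x r)

/-- The nondegeneracy class `ND`. -/
def MemND {n d : ℕ} (V : (Fin n → ℝ) → Matrix (Fin d) (Fin d) ℝ) : Prop :=
  ∀ E : Set (Fin n → ℝ), MeasurableSet E → 0 < volume E → (matInt V E).PosDef

/-- The set of radii used to define the lower auxiliary function. -/
def lowerSet {n d : ℕ} (V : (Fin n → ℝ) → Matrix (Fin d) (Fin d) ℝ)
    (x : Fin n → ℝ) : Set ℝ :=
  {r : ℝ | 0 < r ∧ ∃ e : Fin d → ℝ, vnormSq e = 1 ∧ qf (Psi x r V) e ≤ 1}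

/-- The lower auxiliary function `m̲(x,V)`. -/
def mLower {n d : ℕ} (V : (Fin n → ℝ) → Matrix (Fin d) (Fin d) ℝ) (x : Fin n → ℝ) : ℝ :=
  (sSup (lowerSet V x))⁻¹

/-- The set of radii used to define the upper auxiliary function. -/
def upperSet {n d : ℕ} (V : (Fin n → ℝ) → Matrix (Fin d) (Fin d) ℝ)
    (x : Fin n → ℝ) : Set ℝ :=
  {r : ℝ | 0 < r ∧ matOpNorm (Psi x r V) ≤ 1}

/-- The upper auxiliary function `m̄(x,V)`. -/
def mUpper {n d : ℕ} (V : (Fin n → ℝ) → Matrix (Fin d) (Fin d) ℝ) (x : Fin n → ℝ) : ℝ :=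
  (sSup (upperSet V x))⁻¹

/-- The set of radii used to define the scalar auxiliary function. -/
def scalSet {n : ℕ} (v : (Fin n → ℝ) → ℝ) (x : Fin n → ℝ) : Set ℝ :=
  {r : ℝ | 0 < r ∧ r ^ ((2 : ℝ) - n) * ∫ y in cube x r, v y ≤ 1}

/-- The scalar auxiliary function `m(x,v)`. -/
def mScal {n : ℕ} (v : (Fin n → ℝ) → ℝ) (x : Fin n → ℝ) : ℝ :=
  (sSup (scalSet v x))⁻¹

/-- The positive semidefinite square root of a matrix (junk value `0` off the
positive semidefinite matrices). -/
def msqrt {d : ℕ} (A : Matrix (Fin d) (Fin d) ℝ) : Matrix (Fin d) (Fin d) ℝ :=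
  @dite _ A.PosSemidef (Classical.dec _) (fun h => h.1.eigenvectorUnitary.1 *
    Matrix.diagonal ((↑) ∘ (Real.sqrt ∘ h.1.eigenvalues)) *
    (star h.1.eigenvectorUnitary : Matrix (Fin d) (Fin d) ℝ)) fun _ => 0

/-- The noncommutativity class `NC` with constant `N`. -/
def MemNC {n d : ℕ} (N : ℝ) (V : (Fin n → ℝ) → Matrix (Fin d) (Fin d) ℝ) : Prop :=
  ∀ (x : Fin n → ℝ) (e : Fin d → ℝ),
    N * vnormSq e ≤
      ∫ y in cube x (mLower V x)⁻¹,
        qf (msqrt (V y) * (matInt V (cube x (mLower V x)⁻¹))⁻¹ * msqrt (V y)) e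

/-- The matrix `𝓐_∞` class. -/
def MemAinf {n d : ℕ} (V : (Fin n → ℝ) → Matrix (Fin d) (Fin d) ℝ) : Prop :=
  ∀ ε : ℝ, 0 < ε → ∃ δ : ℝ, 0 < δ ∧ ∀ (x : Fin n → ℝ) (r : ℝ), 0 < r →
    ENNReal.ofReal (1 - ε) * volume (cube x r) ≤
      volume {y ∈ cube x r | (V y - δ • matAvg V (cube x r)).PosSemidef}

/-- The smallest eigenvalue of a symmetric matrix (as the infimum of the Rayleigh
quotient over the unit sphere). -/
def lam1 {d : ℕ} (A : Matrix (Fin d) (Fin d) ℝ) : ℝ :=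
  sInf {t : ℝ | ∃ e : Fin d → ℝ, vnormSq e = 1 ∧ t = qf A e}

/-- Squared Frobenius norm of the Jacobian matrix `Du(x)`. -/
def jacFrobSq {n d : ℕ} (u : (Fin n → ℝ) → Fin d → ℝ) (x : Fin n → ℝ) : ℝ :=
  ∑ j, ∑ i, (fderiv ℝ u x (Pi.single i 1) j) ^ 2

/-! ### Complex (Hermitian) versions -/

/-- The (real-valued) quadratic form `⟨A e, e⟩` of a Hermitian matrix. -/
def qfC {d : ℕ} (A : Matrix (Fin d) (Fin d) ℂ) (e : Fin d → ℂ) : ℝ :=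
  (dotProduct (star e) (A.mulVec e)).re

/-- Squared Euclidean norm of a complex vector. -/
def vnormSqC {d : ℕ} (e : Fin d → ℂ) : ℝ := ∑ i, Complex.normSq (e i)

/-- Entrywise integral of a complex matrix-valued function over a set. -/
def matIntC {n d : ℕ} (V : (Fin n → ℝ) → Matrix (Fin d) (Fin d) ℂ)
    (s : Set (Fin n → ℝ)) : Matrix (Fin d) (Fin d) ℂ :=
  Matrix.of fun i j => ∫ y in s, V y i j

/-- Entrywise average of a complex matrix-valued function over a set. -/
def matAvgC {n d : ℕ} (V : (Fin n → ℝ) → Matrix (Fin d) (Fin d) ℂ)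
    (s : Set (Fin n → ℝ)) : Matrix (Fin d) (Fin d) ℂ :=
  Matrix.of fun i j => ⨍ y in s, V y i j

/-- The Euclidean operator norm of a complex square matrix. -/
def matOpNormC {d : ℕ} (A : Matrix (Fin d) (Fin d) ℂ) : ℝ :=
  sSup {t : ℝ | ∃ e : Fin d → ℂ, vnormSqC e = 1 ∧ t = Real.sqrt (vnormSqC (A.mulVec e))}

/-- `V` is a Hermitian matrix weight. -/
def IsHermWeight {n d : ℕ} (V : (Fin n → ℝ) → Matrix (Fin d) (Fin d) ℂ) : Prop :=
  (∀ i j, Measurable fun x => V x i j) ∧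
  (∀ᵐ (x : Fin n → ℝ) ∂volume, (V x).PosSemidef) ∧
  ∀ (x : Fin n → ℝ) (r : ℝ), 0 < r → IntegrableOn (fun y => matOpNormC (V y)) (cube x r)

/-- The nondegeneracy class `ND` for Hermitian weights. -/
def MemNDC {n d : ℕ} (V : (Fin n → ℝ) → Matrix (Fin d) (Fin d) ℂ) : Prop :=
  ∀ E : Set (Fin n → ℝ), MeasurableSet E → 0 < volume E → (matIntC V E).PosDef

/-- The matrix `𝓐_∞` class for Hermitian weights. -/
def MemAinfC {n d : ℕ} (V : (Fin n → ℝ) → Matrix (Fin d) (Fin d) ℂ) : Prop :=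
  ∀ ε : ℝ, 0 < ε → ∃ δ : ℝ, 0 < δ ∧ ∀ (x : Fin n → ℝ) (r : ℝ), 0 < r →
    ENNReal.ofReal (1 - ε) * volume (cube x r) ≤
      volume {y ∈ cube x r | (V y - δ • matAvgC V (cube x r)).PosSemidef}

/-- The geometric average `exp(⨍_s ln w)` of a nonnegative function, with the
conventions `ln 0 = -∞` and `exp (-∞) = 0`. -/
def geomMean {n : ℕ} (w : (Fin n → ℝ) → ℝ) (s : Set (Fin n → ℝ)) : ℝ :=
  @ite _ ((∀ᵐ y ∂(volume.restrict s), 0 < w y) ∧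
      IntegrableOn (fun y => Real.log (w y)) s) (Classical.dec _)
    (Real.exp (⨍ y in s, Real.log (w y))) 0

/-- The scalar `A_∞` class. -/
def ScalarAinf {n : ℕ} (w : (Fin n → ℝ) → ℝ) : Prop :=
  ∀ ε : ℝ, 0 < ε → ∃ δ : ℝ, 0 < δ ∧ ∀ (x : Fin n → ℝ) (r : ℝ), 0 < r →
    ENNReal.ofReal (1 - ε) * volume (cube x r) ≤
      volume {y ∈ cube x r | δ * ⨍ z in cube x r, w z ≤ w y}

end

/-! For fixed `e`, the function `y ↦ ⟨V(y)ᵀV(y)e, e⟩ = |V(y)e|²` is a nonnegative polynomial of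
degree at most `2k`. On the finite-dimensional space of polynomials of degree at most `m`, the
L¹ norm on the unit cube is definite (a polynomial vanishing on an open box is zero), so it
dominates the sup norm on that cube; for a nonnegative polynomial this reads
`sup_Q g ≤ C ⨍_Q g`. The space is invariant under the affine maps `z ↦ x + r z`, which carry the
unit cube onto every other cube and preserve averages, so the same constant works on all cubes.
Finally, a pointwise bound `g ≤ C ⨍_Q g` on `Q` bounds every `(⨍_Q g^p)^{1/p}` by `C ⨍_Q g`. -/

open MvPolynomial

noncomputable section

variable {n : ℕ}

lemma cube_eq_pi (x : Fin n → ℝ) (r : ℝ) :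
    cube x r = Set.univ.pi fun i => Set.Ioo (x i - r) (x i + r) := by
  ext y
  simp only [cube, Set.mem_ofPred_eq, Set.mem_univ_pi, Set.mem_Ioo, abs_sub_lt_iff]
  exact forall_congr' fun i => by constructor <;> rintro ⟨h₁, h₂⟩ <;> constructor <;> linarith

lemma measurableSet_cube (x : Fin n → ℝ) (r : ℝ) : MeasurableSet (cube x r) := by
  rw [cube_eq_pi]
  exact MeasurableSet.univ_pi fun _ => measurableSet_Ioo

lemma isOpen_cube (x : Fin n → ℝ) (r : ℝ) : IsOpen (cube x r) := by
  rw [cube_eq_pi]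
  exact isOpen_set_pi Set.finite_univ fun _ _ => isOpen_Ioo

lemma cube_subset_Icc (x : Fin n → ℝ) (r : ℝ) :
    cube x r ⊆ Set.Icc (x - fun _ => r) (x + fun _ => r) := fun y hy =>
  ⟨fun i => show x i - r ≤ y i by linarith [(abs_sub_lt_iff.1 (hy i)).2],
    fun i => show y i ≤ x i + r by linarith [(abs_sub_lt_iff.1 (hy i)).1]⟩

lemma volume_cube_ne_top (x : Fin n → ℝ) (r : ℝ) : volume (cube x r) ≠ ⊤ :=
  ((measure_mono (cube_subset_Icc x r)).trans_lt isCompact_Icc.measure_lt_top).ne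

lemma measureReal_cube_pos (x : Fin n → ℝ) {r : ℝ} (hr : 0 < r) : 0 < volume.real (cube x r) :=
  ENNReal.toReal_pos ((isOpen_cube x r).measure_pos volume ⟨x, by simp [cube, hr]⟩).ne'
    (volume_cube_ne_top x r)

lemma Continuous.integrableOn_cube {f : (Fin n → ℝ) → ℝ} (hf : Continuous f) (x : Fin n → ℝ)
    (r : ℝ) : IntegrableOn f (cube x r) :=
  hf.integrableOn_Icc.mono_set (cube_subset_Icc x r)

lemma setAverage_cube_nonneg {f : (Fin n → ℝ) → ℝ} (hf : ∀ y, 0 ≤ f y) (x : Fin n → ℝ) (r : ℝ) :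
    0 ≤ ⨍ y in cube x r, f y :=
  integral_nonneg hf

lemma preimage_add_smul_cube (x : Fin n → ℝ) {r : ℝ} (hr : 0 < r) :
    (fun z => x + r • z) ⁻¹' cube x r = cube 0 1 := by
  ext z
  simp [cube, abs_mul, abs_of_pos hr, hr]

lemma map_add_smul_volume (x : Fin n → ℝ) {r : ℝ} (hr : 0 < r) :
    Measure.map (fun z => x + r • z) (volume : Measure (Fin n → ℝ)) =
      ENNReal.ofReal (r ^ n)⁻¹ • volume := by
  have : (fun z : Fin n → ℝ => x + r • z) = (x + ·) ∘ (r • ·) := rfl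
  rw [this, ← Measure.map_map (measurable_const_add x) (measurable_const_smul r),
    Measure.map_addHaar_smul volume hr.ne', Measure.map_smul, map_add_left_eq_self,
    Module.finrank_fin_fun, abs_of_pos (by positivity)]

lemma setIntegral_cube_eq (f : (Fin n → ℝ) → ℝ) (x : Fin n → ℝ) {r : ℝ} (hr : 0 < r) :
    ∫ y in cube x r, f y = r ^ n * ∫ z in cube 0 1, f (x + r • z) := by
  have hA : MeasurableEmbedding fun z : Fin n → ℝ => x + r • z :=
    ((Homeomorph.smulOfNeZero r hr.ne').trans (Homeomorph.addLeft x)).measurableEmbedding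
  rw [← preimage_add_smul_cube x hr, ← hA.setIntegral_map, map_add_smul_volume x hr,
    Measure.restrict_smul, integral_smul_measure, ENNReal.toReal_ofReal (by positivity),
    smul_eq_mul, mul_inv_cancel_left₀ (by positivity)]

lemma setAverage_cube_eq (f : (Fin n → ℝ) → ℝ) (x : Fin n → ℝ) {r : ℝ} (hr : 0 < r) :
    ⨍ y in cube x r, f y = ⨍ z in cube 0 1, f (x + r • z) := by
  have hvol : volume.real (cube x r) = r ^ n * volume.real (cube (0 : Fin n → ℝ) 1) := by
    simpa using setIntegral_cube_eq (fun _ => (1 : ℝ)) x hr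
  rw [setAverage_eq, setAverage_eq, setIntegral_cube_eq f x hr, hvol, smul_eq_mul, smul_eq_mul,
    mul_inv, mul_mul_mul_comm, inv_mul_cancel₀ (by positivity), one_mul]

lemma eq_zero_of_eval_eq_zero_on_cube {g : MvPolynomial (Fin n) ℝ} {x : Fin n → ℝ} {r : ℝ}
    (hr : 0 < r) (hg : ∀ y ∈ cube x r, eval y g = 0) : g = 0 :=
  funext_set (fun i => Set.Ioo (x i - r) (x i + r)) (fun _ => Set.Ioo_infinite (by linarith))
    fun y hy => by rw [map_zero]; exact hg y (cube_eq_pi x r ▸ hy)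

lemma integrableOn_eval_cube (g : MvPolynomial (Fin n) ℝ) (x : Fin n → ℝ) (r : ℝ) :
    IntegrableOn (fun y => eval y g) (cube x r) :=
  (continuous_eval g).integrableOn_cube x r

lemma MvPolynomial.totalDegree_bind₁_le {σ τ R : Type*} [CommSemiring R]
    {f : σ → MvPolynomial τ R} (hf : ∀ i, (f i).totalDegree ≤ 1) (g : MvPolynomial σ R) :
    (bind₁ f g).totalDegree ≤ g.totalDegree := by
  conv_lhs => rw [g.as_sum, map_sum]
  refine totalDegree_finsetSum_le fun s hs => ?_
  rw [bind₁_monomial]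
  refine (totalDegree_mul _ _).trans ?_
  rw [totalDegree_C, zero_add]
  refine (totalDegree_finsetProd _ _).trans ((Finset.sum_le_sum fun i _ => ?_).trans
    (le_totalDegree hs))
  exact (totalDegree_pow _ _).trans (by simpa using Nat.mul_le_mul_left (s i) (hf i))

lemma MvPolynomial.totalDegree_C_add_C_mul_X_le {σ R : Type*} [CommSemiring R] (a b : R)
    (i : σ) : (C a + C b * X i).totalDegree ≤ 1 :=
  (totalDegree_add _ _).trans <| max_le (by simp) <| (totalDegree_mul _ _).trans <| by
    rw [totalDegree_C, zero_add]
    simpa [X] using totalDegree_monomial_le (Finsupp.single i 1) (1 : R)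

lemma eval_bind₁_C_add_C_mul_X (g : MvPolynomial (Fin n) ℝ) (x z : Fin n → ℝ) (r : ℝ) :
    eval z (bind₁ (fun i => C (x i) + C r * X i) g) = eval (x + r • z) g := by
  induction g using MvPolynomial.induction_on <;> simp_all

/-- A type synonym for `restrictTotalDegree (Fin n) ℝ m`: `MvPolynomial` already carries a
topology (as a subspace of `MvPowerSeries`), which would clash with the L¹ norm put on it here. -/
def PolyDegLE (n m : ℕ) : Type := restrictTotalDegree (Fin n) ℝ m

namespace PolyDegLE

variable {m : ℕ}

instance : AddCommGroup (PolyDegLE n m) :=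
  inferInstanceAs (AddCommGroup (restrictTotalDegree (Fin n) ℝ m))

instance : Module ℝ (PolyDegLE n m) :=
  inferInstanceAs (Module ℝ (restrictTotalDegree (Fin n) ℝ m))

instance : FiniteDimensional ℝ (PolyDegLE n m) :=
  inferInstanceAs (FiniteDimensional ℝ (restrictTotalDegree (Fin n) ℝ m))

def toMvPolynomial : PolyDegLE n m →ₗ[ℝ] MvPolynomial (Fin n) ℝ :=
  (restrictTotalDegree (Fin n) ℝ m).subtype

def mk (g : MvPolynomial (Fin n) ℝ) (hg : g.totalDegree ≤ m) : PolyDegLE n m :=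
  ⟨g, (mem_restrictTotalDegree _ _ _).2 hg⟩

lemma toMvPolynomial_injective : Function.Injective (toMvPolynomial (n := n) (m := m)) :=
  Subtype.val_injective

instance : NormedAddCommGroup (PolyDegLE n m) :=
  AddGroupNorm.toNormedAddCommGroup
  { toFun := fun g => ∫ y in cube 0 1, |eval y (toMvPolynomial g)|
    map_zero' := by simp
    add_le' := fun g h => by
      rw [← integral_add (integrableOn_eval_cube _ _ _).abs (integrableOn_eval_cube _ _ _).abs]
      refine integral_mono (integrableOn_eval_cube _ _ _).abs
        ((integrableOn_eval_cube _ _ _).abs.add (integrableOn_eval_cube _ _ _).abs) fun y => ?_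
      simpa using abs_add_le _ _
    neg' := fun g => by simp
    eq_zero_of_map_eq_zero' := fun g hg => by
      have hae := (integral_eq_zero_iff_of_nonneg (fun _ => abs_nonneg _)
        (integrableOn_eval_cube (toMvPolynomial g) 0 1).abs).1 hg
      have := Measure.eqOn_open_of_ae_eq hae (isOpen_cube 0 1)
        (continuous_eval _).abs.continuousOn continuousOn_const
      refine toMvPolynomial_injective ?_
      rw [map_zero]
      exact eq_zero_of_eval_eq_zero_on_cube one_pos fun y hy => by simpa using this hy }

lemma norm_def (g : PolyDegLE n m) : ‖g‖ = ∫ y in cube 0 1, |eval y (toMvPolynomial g)| := rfl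

instance : NormedSpace ℝ (PolyDegLE n m) where
  norm_smul_le a g := by simp [norm_def, abs_mul, integral_const_mul]

end PolyDegLE

lemma exists_abs_eval_le_integral_abs (n m : ℕ) : ∃ C : ℝ, ∀ g : MvPolynomial (Fin n) ℝ,
    g.totalDegree ≤ m → ∀ y ∈ cube 0 1, |eval y g| ≤ C * ∫ z in cube 0 1, |eval z g| := by
  let K := Set.Icc ((0 : Fin n → ℝ) - fun _ => 1) (0 + fun _ => 1)
  have : CompactSpace K := isCompact_iff_compactSpace.1 isCompact_Icc
  -- a linear map out of a finite-dimensional normed space is bounded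
  let ev : PolyDegLE n m →ₗ[ℝ] C(K, ℝ) :=
    { toFun := fun g => ⟨fun y => eval (y : Fin n → ℝ) (PolyDegLE.toMvPolynomial g),
        (continuous_eval _).comp continuous_subtype_val⟩
      map_add' := fun _ _ => by ext; simp
      map_smul' := fun _ _ => by ext; simp }
  refine ⟨‖LinearMap.toContinuousLinearMap ev‖, fun g hg y hy => ?_⟩
  calc |eval y g| = ‖ev (PolyDegLE.mk g hg) ⟨y, cube_subset_Icc 0 1 hy⟩‖ := rfl
    _ ≤ ‖ev (PolyDegLE.mk g hg)‖ := ContinuousMap.norm_coe_le_norm _ _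
    _ ≤ _ := (LinearMap.toContinuousLinearMap ev).le_opNorm _

lemma exists_eval_le_mul_setAverage (n m : ℕ) : ∃ C : ℝ, 0 < C ∧
    ∀ g : MvPolynomial (Fin n) ℝ, g.totalDegree ≤ m → (∀ y, 0 ≤ eval y g) →
      ∀ (x : Fin n → ℝ) (r : ℝ), 0 < r → ∀ y ∈ cube x r,
        eval y g ≤ C * ⨍ z in cube x r, eval z g := by
  obtain ⟨C₀, hC₀⟩ := exists_abs_eval_le_integral_abs n m
  have hvol := measureReal_cube_pos (0 : Fin n → ℝ) one_pos
  refine ⟨max C₀ 1 * volume.real (cube (0 : Fin n → ℝ) 1), by positivity,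
    fun g hg hg₀ x r hr y hy => ?_⟩
  set g' := bind₁ (fun i => C (x i) + C r * X i) g
  have hg'_eval (z : Fin n → ℝ) : eval z g' = eval (x + r • z) g :=
    eval_bind₁_C_add_C_mul_X g x z r
  have hg' : g'.totalDegree ≤ m :=
    (totalDegree_bind₁_le (fun i => totalDegree_C_add_C_mul_X_le _ _ i) g).trans hg
  set z := r⁻¹ • (y - x)
  have hxz : x + r • z = y := by
    simp only [z, smul_smul, mul_inv_cancel₀ hr.ne', one_smul, add_sub_cancel]
  have hz : z ∈ cube 0 1 := by
    rw [← preimage_add_smul_cube x hr, Set.mem_preimage, hxz]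
    exact hy
  calc eval y g = eval z g' := by rw [hg'_eval, hxz]
    _ ≤ C₀ * ∫ w in cube 0 1, |eval w g'| := (le_abs_self _).trans (hC₀ g' hg' z hz)
    _ = C₀ * volume.real (cube (0 : Fin n → ℝ) 1) * ⨍ w in cube x r, eval w g := by
      simp_rw [abs_of_nonneg (hg'_eval _ ▸ hg₀ _),
        ← measure_smul_setAverage _ (volume_cube_ne_top 0 1), setAverage_cube_eq _ x hr,
        hg'_eval, smul_eq_mul, mul_assoc]
    _ ≤ _ := by gcongr; exacts [setAverage_cube_nonneg hg₀ x r, le_max_left _ _]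

lemma rpow_setAverage_rpow_le {α : Type*} [MeasurableSpace α] {μ : Measure α} {s : Set α}
    (hs : MeasurableSet s) (hμs : μ s ≠ ⊤) {f : α → ℝ} {M p : ℝ} (hp : 0 < p) (hM : 0 ≤ M)
    (hf₀ : ∀ y ∈ s, 0 ≤ f y) (hfM : ∀ y ∈ s, f y ≤ M) :
    (⨍ y in s, f y ^ p ∂μ) ^ (1 / p) ≤ M := by
  have hfp₀ : ∀ y ∈ s, 0 ≤ f y ^ p := fun y hy => Real.rpow_nonneg (hf₀ y hy) p
  have hint : ∫ y in s, f y ^ p ∂μ ≤ μ.real s * M ^ p := by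
    rw [← smul_eq_mul, ← setIntegral_const]
    exact integral_mono_of_nonneg (ae_restrict_of_forall_mem hs hfp₀) (integrableOn_const hμs)
      (ae_restrict_of_forall_mem hs fun y hy => Real.rpow_le_rpow (hf₀ y hy) (hfM y hy) hp.le)
  have havg : ⨍ y in s, f y ^ p ∂μ ≤ M ^ p := by
    rw [setAverage_eq, smul_eq_mul]
    rcases eq_or_ne (μ.real s) 0 with h | h
    · simp [h, Real.rpow_nonneg hM]
    · calc (μ.real s)⁻¹ * ∫ y in s, f y ^ p ∂μ ≤ (μ.real s)⁻¹ * (μ.real s * M ^ p) := by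
            gcongr
        _ = M ^ p := inv_mul_cancel_left₀ h _
  have havg₀ : 0 ≤ ⨍ y in s, f y ^ p ∂μ := by
    rw [setAverage_eq]
    exact smul_nonneg (inv_nonneg.2 measureReal_nonneg) (setIntegral_nonneg hs hfp₀)
  calc (⨍ y in s, f y ^ p ∂μ) ^ (1 / p) ≤ (M ^ p) ^ (1 / p) := by gcongr
    _ = M := by rw [one_div, Real.rpow_rpow_inv hM hp.ne']

lemma exists_memBpScalar_eval (n m : ℕ) : ∃ C : ℝ, 0 < C ∧ ∀ g : MvPolynomial (Fin n) ℝ,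
    g.totalDegree ≤ m → (∀ y, 0 ≤ eval y g) → ∀ p : ℝ, 0 < p →
      MemBpScalar p C fun y => eval y g := by
  obtain ⟨C, hC, hCg⟩ := exists_eval_le_mul_setAverage n m
  refine ⟨C, hC, fun g hg hg₀ p hp => ⟨fun x r _ => ?_, fun x r hr => ?_⟩⟩
  · exact ((continuous_eval g).rpow_const fun _ => Or.inr hp.le).integrableOn_cube x r
  · exact rpow_setAverage_rpow_le (measurableSet_cube x r) (volume_cube_ne_top x r) hp
      (mul_nonneg hC.le (setAverage_cube_nonneg hg₀ x r)) (fun y _ => hg₀ y) (hCg g hg hg₀ x r hr)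

variable {d : ℕ}

lemma vnormSq_nonneg (e : Fin d → ℝ) : 0 ≤ vnormSq e :=
  Finset.sum_nonneg fun i _ => sq_nonneg (e i)

lemma qf_transpose_mul_self (A : Matrix (Fin d) (Fin d) ℝ) (e : Fin d → ℝ) :
    qf (A.transpose * A) e = vnormSq (A.mulVec e) := by
  rw [qf, ← Matrix.mulVec_mulVec, Matrix.dotProduct_mulVec, Matrix.vecMul_transpose, vnormSq]
  simp [dotProduct, sq]

lemma qf_matAvg {W : (Fin n → ℝ) → Matrix (Fin d) (Fin d) ℝ} {s : Set (Fin n → ℝ)}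
    (hW : ∀ i j, IntegrableOn (fun y => W y i j) s) (e : Fin d → ℝ) :
    qf (matAvg W s) e = ⨍ y in s, qf (W y) e := by
  simp only [qf, dotProduct, Matrix.mulVec, matAvg, Matrix.of_apply, setAverage_eq, smul_eq_mul]
  rw [integral_finsetSum _ fun i _ => (integrable_finsetSum _ fun j _ =>
    (hW i j).mul_const _).const_mul _, Finset.mul_sum]
  refine Finset.sum_congr rfl fun i _ => ?_
  rw [integral_const_mul, integral_finsetSum _ fun j _ => (hW i j).mul_const _, Finset.mul_sum,
    Finset.mul_sum, Finset.mul_sum]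
  refine Finset.sum_congr rfl fun j _ => ?_
  rw [integral_mul_const]
  ring

lemma norm_toLp_eq_sqrt_vnormSq (e : Fin d → ℝ) : ‖WithLp.toLp 2 e‖ = √(vnormSq e) := by
  simp [EuclideanSpace.norm_eq, vnormSq]

lemma matOpNorm_eq_norm_toEuclideanCLM (A : Matrix (Fin d) (Fin d) ℝ) :
    matOpNorm A = ‖Matrix.toEuclideanCLM (𝕜 := ℝ) A‖ := by
  rw [← ContinuousLinearMap.sSup_sphere_eq_norm, matOpNorm]
  congr 1
  ext t
  constructor
  · rintro ⟨e, he, rfl⟩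
    exact ⟨WithLp.toLp 2 e, by simp [norm_toLp_eq_sqrt_vnormSq, he],
      by simp [norm_toLp_eq_sqrt_vnormSq]⟩
  · rintro ⟨v, hv, rfl⟩
    rw [mem_sphere_zero_iff_norm, ← WithLp.toLp_ofLp (p := 2) v, norm_toLp_eq_sqrt_vnormSq,
      Real.sqrt_eq_one] at hv
    exact ⟨WithLp.ofLp v, hv, by
      rw [← norm_toLp_eq_sqrt_vnormSq, ← Matrix.toEuclideanCLM_toLp, WithLp.toLp_ofLp]⟩

lemma continuous_matOpNorm : Continuous (matOpNorm : Matrix (Fin d) (Fin d) ℝ → ℝ) := by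
  simp_rw [funext matOpNorm_eq_norm_toEuclideanCLM]
  exact continuous_norm.comp (LinearMap.continuous_of_finiteDimensional
    (Matrix.toEuclideanCLM (n := Fin d) (𝕜 := ℝ)).toAlgEquiv.toLinearMap)

lemma exists_eval_eq_qf_transpose_mul_self {k : ℕ}
    {P : Fin d → Fin d → MvPolynomial (Fin n) ℝ} (hP : ∀ i j, (P i j).totalDegree ≤ k)
    {V : (Fin n → ℝ) → Matrix (Fin d) (Fin d) ℝ} (hV : ∀ x i j, V x i j = eval x (P i j))
    (e : Fin d → ℝ) :
    ∃ G : MvPolynomial (Fin n) ℝ, G.totalDegree ≤ 2 * k ∧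
      ∀ y, eval y G = qf ((V y).transpose * V y) e := by
  refine ⟨∑ l, (∑ j, P l j * C (e j)) ^ 2, ?_, fun y => ?_⟩
  · refine totalDegree_finsetSum_le fun l _ => (totalDegree_pow _ _).trans ?_
    have : (∑ j, P l j * C (e j)).totalDegree ≤ k := totalDegree_finsetSum_le fun j _ =>
      (totalDegree_mul _ _).trans (by simpa using hP l j)
    omega
  · simp [qf_transpose_mul_self, vnormSq, Matrix.mulVec, dotProduct, hV]

end

theorem statement15_general (n k : ℕ) :
    ∃ C : ℝ, 0 < C ∧ ∀ (d : ℕ), 1 ≤ d →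
      ∀ P : Fin d → Fin d → MvPolynomial (Fin n) ℝ,
        (∀ i j, (P i j).totalDegree ≤ k) →
        ∀ V : (Fin n → ℝ) → Matrix (Fin d) (Fin d) ℝ,
          (∀ (x : Fin n → ℝ) (i j : Fin d), V x i j = MvPolynomial.eval x (P i j)) →
          ∀ p : ℝ, 1 < p →
            MemBp p C (fun y => (V y).transpose * V y) ∧
            ∀ (x : Fin n → ℝ) (r : ℝ), 0 < r → ∀ e : Fin d → ℝ,
              (⨍ y in cube x r, qf ((V y).transpose * V y) e ^ p) ^ (1 / p)
                ≤ C * ⨍ y in cube x r, qf ((V y).transpose * V y) e := by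
  obtain ⟨C, hC, hBp⟩ := exists_memBpScalar_eval n (2 * k)
  refine ⟨C, hC, fun d _ P hP V hV p hp => ?_⟩
  have hW_cont : Continuous fun y => (V y).transpose * V y := by
    have hV_cont : Continuous V := continuous_pi fun i => continuous_pi fun j => by
      simpa only [hV] using continuous_eval (P i j)
    exact hV_cont.matrix_transpose.matrix_mul hV_cont
  have reverseHolder (x : Fin n → ℝ) (r : ℝ) (hr : 0 < r) (e : Fin d → ℝ) :
      (⨍ y in cube x r, qf ((V y).transpose * V y) e ^ p) ^ (1 / p)
        ≤ C * ⨍ y in cube x r, qf ((V y).transpose * V y) e := by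
    obtain ⟨G, hG, hG_eval⟩ := exists_eval_eq_qf_transpose_mul_self hP hV e
    have hG₀ (y : Fin n → ℝ) : 0 ≤ eval y G := by
      rw [hG_eval, qf_transpose_mul_self]
      exact vnormSq_nonneg _
    simpa only [hG_eval] using (hBp G hG hG₀ p (by linarith)).2 x r hr
  refine ⟨⟨fun x r _ => ?_, fun x r hr e => ?_⟩, reverseHolder⟩
  · exact ((continuous_matOpNorm.comp hW_cont).rpow_const fun _ => Or.inr (by linarith))
      |>.integrableOn_cube x r
  · rw [qf_matAvg (W := fun y => (V y).transpose * V y) fun i j =>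
      ((continuous_apply_apply i j).comp hW_cont).integrableOn_cube x r]
    exact reverseHolder x r hr e

theorem statement15 (n k : ℕ) (hn : 1 ≤ n) :
    ∃ C : ℝ, 0 < C ∧ ∀ (d : ℕ), 1 ≤ d →
      ∀ P : Fin d → Fin d → MvPolynomial (Fin n) ℝ,
        (∀ i j, (P i j).totalDegree ≤ k) →
        ∀ V : (Fin n → ℝ) → Matrix (Fin d) (Fin d) ℝ,
          (∀ (x : Fin n → ℝ) (i j : Fin d), V x i j = MvPolynomial.eval x (P i j)) →
          ∀ p : ℝ, 1 < p →
            MemBp p C (fun y => (V y).transpose * V y) ∧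
            ∀ (x : Fin n → ℝ) (r : ℝ), 0 < r → ∀ e : Fin d → ℝ,
              (⨍ y in cube x r, qf ((V y).transpose * V y) e ^ p) ^ (1 / p)
                ≤ C * ⨍ y in cube x r, qf ((V y).transpose * V y) e :=
  statement15_general n k
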